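/- arXiv:math/0203024 — 2 statements merged into one kernel-verified Lean document; each statement's English description precedes it below -/
import Mathlib

section
/- Let α ∈ (0,1) be irrational with partial quotients (a_n). The set V_α of x ∈ (0,1) having a unique representation x = Σ x_n α_n with x_n ∈ {0,...,a_n} is empty if and only if a_n = 1 for infinitely many n. -/
open Filter Finset

section Aux

variable {a : ℕ → ℕ} {D : ℕ → ℝ}

lemma ostro_anti (ha : ∀ n, 1 ≤ a n) (hpos : ∀ n, 0 < D n)
    (hrec : ∀ n, D n = a n * D (n + 1) + D (n + 2)) : ∀ n, D (n + 1) < D n := by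
  intro n
  have h1 := hpos (n + 1)
  have h2 := hpos (n + 2)
  have h3 : (1 : ℝ) ≤ a n := by exact_mod_cast ha n
  nlinarith [hrec n]

lemma ostro_anti_le (ha : ∀ n, 1 ≤ a n) (hpos : ∀ n, 0 < D n)
    (hrec : ∀ n, D n = a n * D (n + 1) + D (n + 2)) : ∀ m n, m ≤ n → D n ≤ D m := by
  intro m n h
  induction n with
  | zero =>
    have : m = 0 := Nat.le_zero.mp h
    simp [this]
  | succ k ih =>
    rcases Nat.lt_or_ge m (k+1) with h'|h'
    · exact le_trans (ostro_anti ha hpos hrec k).le (ih (by omega))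
    · have : m = k + 1 := by omega
      simp [this]

lemma ostro_half (ha : ∀ n, 1 ≤ a n) (hpos : ∀ n, 0 < D n)
    (hrec : ∀ n, D n = a n * D (n + 1) + D (n + 2)) : ∀ n, D (n + 2) ≤ D n / 2 := by
  intro n
  have h1 := ostro_anti ha hpos hrec (n + 1)
  have h3 : (1 : ℝ) ≤ a n := by exact_mod_cast ha n
  have h2 := hpos (n + 1)
  nlinarith [hrec n]

lemma ostro_summable (ha : ∀ n, 1 ≤ a n) (hpos : ∀ n, 0 < D n)
    (hrec : ∀ n, D n = a n * D (n + 1) + D (n + 2)) : Summable D := by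
  have key : ∀ c : ℕ, c ≤ 1 → Summable (fun k : ℕ => D (2 * k + c)) := by
    intro c hc
    have hb : ∀ k, D (2 * k + c) ≤ D c * (1 / 2) ^ k := by
      intro k
      induction k with
      | zero => simp
      | succ j ih =>
        have h := ostro_half ha hpos hrec (2 * j + c)
        have : 2 * (j + 1) + c = (2 * j + c) + 2 := by ring
        rw [this]
        have hD : 0 < D c := hpos c
        calc D (2 * j + c + 2) ≤ D (2 * j + c) / 2 := h
          _ ≤ D c * (1 / 2) ^ j / 2 := by linarith
          _ = D c * (1 / 2) ^ (j + 1) := by ring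
    apply Summable.of_nonneg_of_le (fun k => (hpos _).le) hb
    exact (summable_geometric_of_lt_one (by norm_num) (by norm_num)).mul_left _
  have he := key 0 (by norm_num)
  have ho := key 1 (by norm_num)
  simp only [add_zero] at he
  exact Summable.even_add_odd he ho

lemma ostro_tendsto (ha : ∀ n, 1 ≤ a n) (hpos : ∀ n, 0 < D n)
    (hrec : ∀ n, D n = a n * D (n + 1) + D (n + 2)) : Tendsto D atTop (nhds 0) :=
  (ostro_summable ha hpos hrec).tendsto_atTop_zero

lemma ostro_partial (hrec : ∀ n, D n = a n * D (n + 1) + D (n + 2)) (N : ℕ) :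
    ∀ K : ℕ, ∑ i ∈ range K, (a (i + N) : ℝ) * D (i + N + 1)
      = D N + D (N + 1) - D (K + N) - D (K + N + 1) := by
  intro K
  induction K with
  | zero => simp
  | succ k ih =>
    rw [Finset.sum_range_succ, ih]
    have e2 : k + 1 + N = k + N + 1 := by omega
    have e4 : k + N + 1 + 1 = k + N + 2 := by omega
    rw [e2, e4]
    linarith [hrec (k + N)]

/-- the partial-sum to HasSum helper for nonneg sequences. -/
lemma hasSum_of_tendsto_of_nonneg {f : ℕ → ℝ} (hf : ∀ n, 0 ≤ f n) {L : ℝ}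
    (h : Tendsto (fun K => ∑ i ∈ range K, f i) atTop (nhds L)) : HasSum f L := by
  have hmono : Monotone fun K => ∑ i ∈ range K, f i := by
    intro i j hij
    exact Finset.sum_le_sum_of_subset_of_nonneg (Finset.range_subset_range.2 hij)
      (fun k _ _ => hf k)
  have hb : ∀ K, ∑ i ∈ range K, f i ≤ L := fun K => hmono.ge_of_tendsto h K
  have hsum : Summable f := summable_of_sum_range_le hf hb
  exact hsum.hasSum_iff.mpr (tendsto_nhds_unique hsum.hasSum.tendsto_sum_nat h)

lemma ostro_tel (ha : ∀ n, 1 ≤ a n) (hpos : ∀ n, 0 < D n)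
    (hrec : ∀ n, D n = a n * D (n + 1) + D (n + 2)) (N : ℕ) :
    HasSum (fun i => (a (i + N) : ℝ) * D (i + N + 1)) (D N + D (N + 1)) := by
  apply hasSum_of_tendsto_of_nonneg
  · intro n
    exact mul_nonneg (Nat.cast_nonneg _) (hpos _).le
  · have h0 : Tendsto (fun K : ℕ => D (K + N)) atTop (nhds 0) :=
      (ostro_tendsto ha hpos hrec).comp (tendsto_add_atTop_nat N)
    have h1 : Tendsto (fun K : ℕ => D (K + N + 1)) atTop (nhds 0) :=
      (ostro_tendsto ha hpos hrec).comp (tendsto_add_atTop_nat (N + 1))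
    have h2 : Tendsto (fun K : ℕ => D N + D (N + 1) - D (K + N) - D (K + N + 1)) atTop
        (nhds (D N + D (N + 1))) := by
      have h3 : Tendsto (fun _ : ℕ => D N + D (N + 1)) atTop (nhds (D N + D (N + 1))) :=
        tendsto_const_nhds
      have h4 := (h3.sub h0).sub h1
      simpa using h4
    exact h2.congr (fun K => (ostro_partial hrec N K).symm)

end Aux

section Aux2
variable {a : ℕ → ℕ} {D : ℕ → ℝ}

lemma ostro_greedy (ha : ∀ n, 1 ≤ a n) (hpos : ∀ n, 0 < D n)
    (hrec : ∀ n, D n = a n * D (n + 1) + D (n + 2))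
    (hten : Tendsto D atTop (nhds 0)) (N : ℕ) {r : ℝ}
    (h0 : 0 ≤ r) (h1 : r ≤ D N + D (N + 1)) :
    ∃ y : ℕ → ℕ, (∀ m, y m ≤ a m) ∧
      HasSum (fun i => (y (i + N) : ℝ) * D (i + N + 1)) r := by
  obtain ⟨rem, hrem0, hremS⟩ : ∃ rem : ℕ → ℝ, rem 0 = r ∧ ∀ k,
      rem (k + 1) = rem k - (min (a (k + N)) ⌊rem k / D (k + N + 1)⌋₊ : ℕ) * D (k + N + 1) :=
    ⟨fun k => Nat.rec r (fun k ρ =>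
      ρ - (min (a (k + N)) ⌊ρ / D (k + N + 1)⌋₊ : ℕ) * D (k + N + 1)) k, rfl, fun _ => rfl⟩
  -- invariant
  have hinv : ∀ k, 0 ≤ rem k ∧ rem k ≤ D (k + N) + D (k + N + 1) := by
    intro k
    induction k with
    | zero => exact ⟨by rw [hrem0]; exact h0, by rw [hrem0]; simpa using h1⟩
    | succ k ih =>
      obtain ⟨il, iu⟩ := ih
      have hw : 0 < D (k + N + 1) := hpos _
      have hq : 0 ≤ rem k / D (k + N + 1) := div_nonneg il hw.le
      rcases le_or_gt (a (k + N)) ⌊rem k / D (k + N + 1)⌋₊ with hd | hd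
      · have hmin : min (a (k + N)) ⌊rem k / D (k + N + 1)⌋₊ = a (k + N) := min_eq_left hd
        have hcast : (a (k + N) : ℝ) ≤ rem k / D (k + N + 1) :=
          le_trans (by exact_mod_cast hd) (Nat.floor_le hq)
        have hge : (a (k + N) : ℝ) * D (k + N + 1) ≤ rem k :=
          (le_div_iff₀ hw).mp hcast
        constructor
        · rw [hremS k, hmin]; linarith
        · rw [hremS k, hmin]
          have h2 := hrec (k + N)
          have e1 : k + 1 + N = k + N + 1 := by omega
          have e2 : k + N + 1 + 1 = k + N + 2 := by omega
          rw [e1, e2]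
          linarith
      · have hmin : min (a (k + N)) ⌊rem k / D (k + N + 1)⌋₊ = ⌊rem k / D (k + N + 1)⌋₊ :=
          min_eq_right hd.le
        have hle : (⌊rem k / D (k + N + 1)⌋₊ : ℝ) ≤ rem k / D (k + N + 1) := Nat.floor_le hq
        have hlt : rem k / D (k + N + 1) < ⌊rem k / D (k + N + 1)⌋₊ + 1 :=
          Nat.lt_floor_add_one _
        have hle' : (⌊rem k / D (k + N + 1)⌋₊ : ℝ) * D (k + N + 1) ≤ rem k := by
          rw [← le_div_iff₀ hw]; exact hle
        have hlt' : rem k < (⌊rem k / D (k + N + 1)⌋₊ + 1 : ℝ) * D (k + N + 1) := by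
          rw [← div_lt_iff₀ hw]; exact hlt
        constructor
        · rw [hremS k, hmin]; linarith
        · rw [hremS k, hmin]
          have e1 : k + 1 + N = k + N + 1 := by omega
          have e2 : k + N + 1 + 1 = k + N + 2 := by omega
          rw [e1, e2]
          have := hpos (k + N + 2)
          push_cast
          nlinarith
  refine ⟨fun m => if N ≤ m then min (a m) ⌊rem (m - N) / D (m + 1)⌋₊ else 0, ?_, ?_⟩
  · intro m
    by_cases hm : N ≤ m
    · simp [hm, min_le_left]
    · simp [hm]
  · have hyi : ∀ i : ℕ,
        (fun m => if N ≤ m then min (a m) ⌊rem (m - N) / D (m + 1)⌋₊ else 0) (i + N)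
          = min (a (i + N)) ⌊rem i / D (i + N + 1)⌋₊ := by
      intro i
      simp [Nat.le_add_left, Nat.add_sub_cancel]
    have hpartial : ∀ K, ∑ i ∈ range K,
        ((fun m => if N ≤ m then min (a m) ⌊rem (m - N) / D (m + 1)⌋₊ else 0) (i + N) : ℝ)
          * D (i + N + 1) = r - rem K := by
      intro K
      induction K with
      | zero => simp [hrem0]
      | succ k ih =>
        rw [Finset.sum_range_succ, ih, hyi k, hremS k]
        ring
    apply hasSum_of_tendsto_of_nonneg
    · intro i
      exact mul_nonneg (Nat.cast_nonneg _) (hpos _).le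
    · have hrem_ten : Tendsto rem atTop (nhds 0) := by
        have hub : Tendsto (fun k : ℕ => D (k + N) + D (k + N + 1)) atTop (nhds 0) := by
          have t1 : Tendsto (fun k : ℕ => D (k + N)) atTop (nhds 0) :=
            hten.comp (tendsto_add_atTop_nat N)
          have t2 : Tendsto (fun k : ℕ => D (k + N + 1)) atTop (nhds 0) :=
            hten.comp (tendsto_add_atTop_nat (N + 1))
          simpa using t1.add t2
        exact tendsto_of_tendsto_of_tendsto_of_le_of_le tendsto_const_nhds hub
          (fun k => (hinv k).1) (fun k => (hinv k).2)
      have : Tendsto (fun K => r - rem K) atTop (nhds r) := by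
        have := (tendsto_const_nhds (x := r) (f := (atTop : Filter ℕ))).sub hrem_ten
        simpa using this
      exact this.congr (fun K => (hpartial K).symm)

end Aux2
section Aux3
variable {a : ℕ → ℕ} {D : ℕ → ℝ}

lemma tsum_shift_succ {f : ℕ → ℝ} (hf : Summable f) (N : ℕ) :
    ∑' i, f (i + N) = f N + ∑' i, f (i + (N + 1)) := by
  have hs : Summable fun i => f (i + N) := (summable_nat_add_iff N).mpr hf
  rw [Summable.tsum_eq_zero_add hs]
  congr 1
  · simp
  · apply tsum_congr; intro i; congr 1; omega

lemma ostro_digit_summable (ha : ∀ n, 1 ≤ a n) (hpos : ∀ n, 0 < D n)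
    (hrec : ∀ n, D n = a n * D (n + 1) + D (n + 2))
    {xs : ℕ → ℕ} (hxs : ∀ n, xs n ≤ a n) :
    Summable (fun m => (xs m : ℝ) * D (m + 1)) := by
  have htel := (ostro_tel ha hpos hrec 0).summable
  have htel' : Summable (fun m => (a m : ℝ) * D (m + 1)) := by
    apply htel.congr
    intro i; simp
  apply Summable.of_nonneg_of_le
    (fun m => mul_nonneg (Nat.cast_nonneg _) (hpos _).le) _ htel'
  intro m
  have : (xs m : ℝ) ≤ a m := by exact_mod_cast hxs m
  exact mul_le_mul_of_nonneg_right this (hpos _).le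

lemma ostro_tail_nonneg (hpos : ∀ n, 0 < D n) (xs : ℕ → ℕ) (N : ℕ) :
    0 ≤ ∑' i, (xs (i + N) : ℝ) * D (i + N + 1) :=
  tsum_nonneg (fun i => mul_nonneg (Nat.cast_nonneg _) (hpos _).le)

lemma ostro_tail_ub (ha : ∀ n, 1 ≤ a n) (hpos : ∀ n, 0 < D n)
    (hrec : ∀ n, D n = a n * D (n + 1) + D (n + 2))
    {xs : ℕ → ℕ} (hxs : ∀ n, xs n ≤ a n) (N : ℕ) :
    ∑' i, (xs (i + N) : ℝ) * D (i + N + 1) ≤ D N + D (N + 1) := by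
  have htel := ostro_tel ha hpos hrec N
  have hsum0 : Summable (fun m => (xs m : ℝ) * D (m + 1)) :=
    ostro_digit_summable ha hpos hrec hxs
  have hsx : Summable (fun i => (xs (i + N) : ℝ) * D (i + N + 1)) :=
    (summable_nat_add_iff N).mpr hsum0
  have hle : ∀ i, (xs (i + N) : ℝ) * D (i + N + 1) ≤ (a (i + N) : ℝ) * D (i + N + 1) := by
    intro i
    have : (xs (i + N) : ℝ) ≤ a (i + N) := by exact_mod_cast hxs (i + N)
    exact mul_le_mul_of_nonneg_right this (hpos _).le
  calc ∑' i, (xs (i + N) : ℝ) * D (i + N + 1)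
      ≤ ∑' i, (a (i + N) : ℝ) * D (i + N + 1) := Summable.tsum_le_tsum hle hsx htel.summable
    _ = D N + D (N + 1) := htel.tsum_eq

lemma ostro_tail_maxed (ha : ∀ n, 1 ≤ a n) (hpos : ∀ n, 0 < D n)
    (hrec : ∀ n, D n = a n * D (n + 1) + D (n + 2))
    {xs : ℕ → ℕ} (N : ℕ) (h : ∀ m, N ≤ m → xs m = a m) :
    ∑' i, (xs (i + N) : ℝ) * D (i + N + 1) = D N + D (N + 1) := by
  rw [← (ostro_tel ha hpos hrec N).tsum_eq]
  apply tsum_congr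
  intro i
  rw [h (i + N) (Nat.le_add_left _ _)]

lemma ostro_tail_zero {D : ℕ → ℝ} {xs : ℕ → ℕ} (N : ℕ) (h : ∀ m, N ≤ m → xs m = 0) :
    ∑' i, (xs (i + N) : ℝ) * D (i + N + 1) = 0 := by
  have : ∀ i : ℕ, (xs (i + N) : ℝ) * D (i + N + 1) = 0 := by
    intro i
    rw [h (i + N) (Nat.le_add_left _ _)]
    simp
  simp [this]

lemma ostro_anti2 (ha : ∀ n, 1 ≤ a n) (hpos : ∀ n, 0 < D n)
    (hrec : ∀ n, D n = a n * D (n + 1) + D (n + 2)) (n : ℕ) : D (n + 2) < D (n + 1) := by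
  have h := ostro_anti ha hpos hrec (n + 1)
  have e : n + 1 + 1 = n + 2 := by omega
  rwa [e] at h

end Aux3
section Aux4
variable {a : ℕ → ℕ} {D : ℕ → ℝ}

lemma ostro_backward (ha : ∀ n, 1 ≤ a n) (hpos : ∀ n, 0 < D n)
    (hrec : ∀ n, D n = a n * D (n + 1) + D (n + 2)) (hD0 : D 0 = 1)
    (hinf : {n : ℕ | a n = 1}.Infinite) {x : ℝ} (hx0 : 0 < x) (hx1 : x < 1) :
    ¬ ∃! xs : ℕ → ℕ, (∀ n, xs n ≤ a n) ∧ x = ∑' n : ℕ, (xs n : ℝ) * D (n + 1) := by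
  rintro ⟨xs, ⟨hb, hsum⟩, huni⟩
  have hten := ostro_tendsto ha hpos hrec
  have hfs : Summable (fun m => (xs m : ℝ) * D (m + 1)) :=
    ostro_digit_summable ha hpos hrec hb
  set R : ℕ → ℝ := fun M => ∑' i, (xs (i + M) : ℝ) * D (i + M + 1) with hRdef
  have hshift : ∀ M, R M = (xs M : ℝ) * D (M + 1) + R (M + 1) := by
    intro M
    have h := tsum_shift_succ (f := fun m => (xs m : ℝ) * D (m + 1)) hfs M
    simpa [hRdef] using h
  have hnn : ∀ M, 0 ≤ R M := fun M => ostro_tail_nonneg hpos xs M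
  have hub : ∀ M, R M ≤ D M + D (M + 1) := fun M => ostro_tail_ub ha hpos hrec hb M
  have hhead : ∀ M, x = (∑ i ∈ Finset.range M, (xs i : ℝ) * D (i + 1)) + R M := by
    intro M
    rw [hsum]
    exact (Summable.sum_add_tsum_nat_add M hfs).symm
  -- U1 : greedy-side uniqueness constraint
  have hU1 : ∀ N, xs N < a N → R (N + 1) < D (N + 1) := by
    intro N hN
    by_contra hge
    push_neg at hge
    have h0' : 0 ≤ R (N + 1) - D (N + 1) := by linarith
    have h1' : R (N + 1) - D (N + 1) ≤ D (N + 1) + D (N + 2) := by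
      have := hub (N + 1)
      have := hpos (N + 1)
      linarith
    obtain ⟨y, hyb, hysum⟩ := ostro_greedy ha hpos hrec hten (N + 1) h0' h1'
    set z : ℕ → ℕ := fun m => if m < N then xs m else if m = N then xs N + 1 else y m with hzdef
    have hzb : ∀ m, z m ≤ a m := by
      intro m
      rcases lt_trichotomy m N with h | h | h
      · simp [hzdef, h, hb m]
      · subst h; simp [hzdef]; omega
      · simp [hzdef, Nat.lt_asymm h, Nat.ne_of_gt h, hyb m]
    have hsz : Summable (fun m => (z m : ℝ) * D (m + 1)) :=
      ostro_digit_summable ha hpos hrec hzb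
    have htail : ∑' i, (z (i + (N + 1)) : ℝ) * D (i + (N + 1) + 1)
        = R (N + 1) - D (N + 1) := by
      rw [← hysum.tsum_eq]
      apply tsum_congr
      intro i
      have h1 : ¬ (i + (N + 1) < N) := by omega
      have h2 : ¬ (i + (N + 1) = N) := by omega
      simp [hzdef, h1, h2]
    have hheadz : ∑ i ∈ Finset.range (N + 1), (z i : ℝ) * D (i + 1)
        = (∑ i ∈ Finset.range N, (xs i : ℝ) * D (i + 1)) + ((xs N : ℝ) + 1) * D (N + 1) := by
      rw [Finset.sum_range_succ]
      congr 1
      · apply Finset.sum_congr rfl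
        intro i hi
        have : i < N := Finset.mem_range.mp hi
        simp [hzdef, this]
      · have hzN : z N = xs N + 1 := by simp [hzdef]
        rw [hzN]
        push_cast
        ring
    have hzx : x = ∑' m, (z m : ℝ) * D (m + 1) := by
      rw [← Summable.sum_add_tsum_nat_add (N + 1) hsz, hheadz, htail]
      have := hhead (N + 1)
      rw [Finset.sum_range_succ] at this
      linarith
    have hzeq := huni z ⟨hzb, hzx⟩
    have hcf := congrFun hzeq N
    have hzN : z N = xs N + 1 := by simp [hzdef]
    rw [hzN] at hcf
    omega
  -- U2 : lazy-side uniqueness constraint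
  have hU2 : ∀ N, 1 ≤ xs N → D (N + 2) < R (N + 1) := by
    intro N hN
    by_contra hge
    push_neg at hge
    have h0' : 0 ≤ R (N + 1) + D (N + 1) := by
      have := hnn (N + 1); have := hpos (N + 1); linarith
    have h1' : R (N + 1) + D (N + 1) ≤ D (N + 1) + D (N + 2) := by linarith
    obtain ⟨y, hyb, hysum⟩ := ostro_greedy ha hpos hrec hten (N + 1) h0' h1'
    set z : ℕ → ℕ := fun m => if m < N then xs m else if m = N then xs N - 1 else y m with hzdef
    have hzb : ∀ m, z m ≤ a m := by
      intro m
      rcases lt_trichotomy m N with h | h | h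
      · simp [hzdef, h, hb m]
      · subst h; simp [hzdef]
        have := hb m
        omega
      · simp [hzdef, Nat.lt_asymm h, Nat.ne_of_gt h, hyb m]
    have hsz : Summable (fun m => (z m : ℝ) * D (m + 1)) :=
      ostro_digit_summable ha hpos hrec hzb
    have htail : ∑' i, (z (i + (N + 1)) : ℝ) * D (i + (N + 1) + 1)
        = R (N + 1) + D (N + 1) := by
      rw [← hysum.tsum_eq]
      apply tsum_congr
      intro i
      have h1 : ¬ (i + (N + 1) < N) := by omega
      have h2 : ¬ (i + (N + 1) = N) := by omega
      simp [hzdef, h1, h2]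
    have hheadz : ∑ i ∈ Finset.range (N + 1), (z i : ℝ) * D (i + 1)
        = (∑ i ∈ Finset.range N, (xs i : ℝ) * D (i + 1)) + ((xs N : ℝ) - 1) * D (N + 1) := by
      rw [Finset.sum_range_succ]
      congr 1
      · apply Finset.sum_congr rfl
        intro i hi
        have : i < N := Finset.mem_range.mp hi
        simp [hzdef, this]
      · have hzN : z N = xs N - 1 := by simp [hzdef]
        rw [hzN]
        have : ((xs N - 1 : ℕ) : ℝ) = (xs N : ℝ) - 1 := by
          push_cast [hN]
          ring
        rw [this]
    have hzx : x = ∑' m, (z m : ℝ) * D (m + 1) := by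
      rw [← Summable.sum_add_tsum_nat_add (N + 1) hsz, hheadz, htail]
      have := hhead (N + 1)
      rw [Finset.sum_range_succ] at this
      linarith
    have hzeq := huni z ⟨hzb, hzx⟩
    have hcf := congrFun hzeq N
    have hzN : z N = xs N - 1 := by simp [hzdef]
    rw [hzN] at hcf
    omega
  -- now the combinatorial contradiction
  obtain ⟨N, hN⟩ := hinf.nonempty
  have hN1 : a N = 1 := hN
  have hxsN : xs N = 0 ∨ xs N = 1 := by have := hb N; omega
  rcases hxsN with hcase | hcase
  · -- xs N = 0 : everything collapses to the zero sequence
    have hQ : ∀ M, N + 1 ≤ M → R M < D M := by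
      intro M hM
      induction M, hM using Nat.le_induction with
      | base => exact hU1 N (by omega)
      | succ M hM ih =>
        rcases lt_or_ge (xs M) (a M) with h | h
        · exact hU1 M h
        · have hMa : xs M = a M := le_antisymm (hb M) h
          have hcast : (xs M : ℝ) = (a M : ℝ) := by exact_mod_cast hMa
          have h2 := hrec M
          have h3 := ostro_anti2 ha hpos hrec M
          have h4 := hshift M
          rw [hcast] at h4
          linarith
    have hPA : ∀ P, N + 1 ≤ P → a P = 1 → xs P = 0 := by
      intro P hP haP
      by_contra hzero
      have h1 : 1 ≤ xs P := by omega
      have h2 := hU2 P h1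
      have h3 := hQ P hP
      have h4 := hshift P
      have h5 := hrec P
      have hxP : xs P = 1 := by have := hb P; omega
      have hcast : (xs P : ℝ) = 1 := by exact_mod_cast hxP
      have hacast : (a P : ℝ) = 1 := by exact_mod_cast haP
      rw [hcast] at h4
      rw [hacast] at h5
      linarith
    have hZA1 : ∀ m, N + 1 ≤ m → xs m = 0 := by
      intro m hm
      obtain ⟨P, hPmem, hPgt⟩ := hinf.exists_gt (max m (N + 1))
      have haP : a P = 1 := hPmem
      have hm1 := le_max_left m (N + 1)
      have hm2 := le_max_right m (N + 1)
      have key : ∀ j M, N + 1 ≤ M → M + j = P → xs M = 0 := by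
        intro j
        induction j with
        | zero =>
          intro M hM hMP
          have hMeq : M = P := by omega
          subst hMeq
          exact hPA M hM haP
        | succ j ih =>
          intro M hM hMP
          have hnext : xs (M + 1) = 0 := ih (M + 1) (by omega) (by omega)
          by_contra hzero
          have h1 : 1 ≤ xs M := by omega
          have h2 := hU2 M h1
          have h4 := hshift (M + 1)
          have e2 : M + 1 + 1 = M + 2 := by omega
          rw [e2, hnext] at h4
          norm_num at h4
          have h5 := hQ (M + 2) (by omega)
          linarith
      exact key (P - m) m hm (by omega)
    have hall : ∀ m, xs m = 0 := by
      have key2 : ∀ k m, N + 1 ≤ m + k → xs m = 0 := by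
        intro k
        induction k with
        | zero => intro m hm; exact hZA1 m (by omega)
        | succ k ih =>
          intro m hm
          rcases le_or_gt (N + 1) (m + k) with h | h
          · exact ih m h
          · have htail0 : ∀ j, m + 1 ≤ j → xs j = 0 := fun j hj => ih j (by omega)
            have hR0 : R (m + 1) = 0 := ostro_tail_zero (m + 1) htail0
            by_contra hzero
            have h1 : 1 ≤ xs m := by omega
            have h2 := hU2 m h1
            have := hpos (m + 2)
            linarith
      intro m
      exact key2 (N + 1) m (by omega)
    have hx' : x = R 0 := by simpa using hhead 0
    have hR0 : R 0 = 0 := ostro_tail_zero 0 (fun m _ => hall m)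
    linarith
  · -- xs N = 1 : everything collapses to the maximal sequence
    have hQ : ∀ M, N + 1 ≤ M → D (M + 1) < R M := by
      intro M hM
      induction M, hM using Nat.le_induction with
      | base =>
        have h2 := hU2 N (by omega)
        have e : N + 2 = N + 1 + 1 := by omega
        rwa [e] at h2
      | succ M hM ih =>
        have e : M + 1 + 1 = M + 2 := by omega
        rw [e]
        have hx1' : 1 ≤ xs M := by
          by_contra h
          have h0 : xs M = 0 := by omega
          have hlt := hU1 M (by have := ha M; omega)
          have h4 := hshift M
          rw [h0] at h4
          norm_num at h4
          linarith
        exact hU2 M hx1'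
    have hxs1 : ∀ M, N + 1 ≤ M → 1 ≤ xs M := by
      intro M hM
      by_contra h
      have h0 : xs M = 0 := by omega
      have hlt := hU1 M (by have := ha M; omega)
      have h4 := hshift M
      rw [h0] at h4
      norm_num at h4
      have h6 := hQ M hM
      linarith
    have hPB : ∀ M, N + 1 ≤ M → a (M + 1) = 1 → xs M = a M := by
      intro M hM haM
      by_contra h
      have hlt := hU1 M (by have := hb M; omega)
      have h4 := hshift (M + 1)
      have e : M + 1 + 1 = M + 2 := by omega
      rw [e] at h4
      have h5 : (1 : ℝ) ≤ (xs (M + 1) : ℝ) := by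
        exact_mod_cast hxs1 (M + 1) (by omega)
      have h6 := hQ (M + 2) (by omega)
      have e2 : M + 2 + 1 = M + 3 := by omega
      rw [e2] at h6
      have h7 := hrec (M + 1)
      have e3 : M + 1 + 2 = M + 3 := by omega
      rw [e, e3, haM] at h7
      norm_num at h7
      have hD2 : (0 : ℝ) < D (M + 2) := hpos _
      linarith [mul_nonneg (sub_nonneg.mpr h5) hD2.le]
    have hZB1 : ∀ m, N + 1 ≤ m → xs m = a m := by
      intro m hm
      obtain ⟨P, hPmem, hPgt⟩ := hinf.exists_gt (max (m + 1) (N + 1))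
      have haP : a P = 1 := hPmem
      have hm1 := le_max_left (m + 1) (N + 1)
      have hm2 := le_max_right (m + 1) (N + 1)
      have key : ∀ j M, N + 1 ≤ M → M + j + 1 = P → xs M = a M := by
        intro j
        induction j with
        | zero =>
          intro M hM hMP
          apply hPB M hM
          have hMeq : M + 1 = P := by omega
          rw [hMeq]
          exact haP
        | succ j ih =>
          intro M hM hMP
          have hnext : xs (M + 1) = a (M + 1) := ih (M + 1) (by omega) (by omega)
          by_contra h
          have hlt := hU1 M (by have := hb M; omega)
          have h4 := hshift (M + 1)
          have e : M + 1 + 1 = M + 2 := by omega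
          rw [e, hnext] at h4
          have h6 := hQ (M + 2) (by omega)
          have e2 : M + 2 + 1 = M + 3 := by omega
          rw [e2] at h6
          have h7 := hrec (M + 1)
          have e3 : M + 1 + 2 = M + 3 := by omega
          rw [e, e3] at h7
          linarith
      exact key (P - m - 1) m hm (by omega)
    have hallmax : ∀ m, xs m = a m := by
      have key2 : ∀ k m, N + 1 ≤ m + k → xs m = a m := by
        intro k
        induction k with
        | zero => intro m hm; exact hZB1 m (by omega)
        | succ k ih =>
          intro m hm
          rcases le_or_gt (N + 1) (m + k) with h | h
          · exact ih m h
          · have htl : ∀ j, m + 1 ≤ j → xs j = a j := fun j hj => ih j (by omega)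
            have hRm : R (m + 1) = D (m + 1) + D (m + 1 + 1) :=
              ostro_tail_maxed ha hpos hrec (m + 1) htl
            by_contra hne
            have hlt := hU1 m (by have := hb m; omega)
            have := hpos (m + 1 + 1)
            linarith
      intro m
      exact key2 (N + 1) m (by omega)
    have hx' : x = R 0 := by simpa using hhead 0
    have hR0 : R 0 = D 0 + D (0 + 1) :=
      ostro_tail_maxed ha hpos hrec 0 (fun m _ => hallmax m)
    have h01 : D (0 + 1) = D 1 := by norm_num
    have := hpos 1
    rw [hR0, h01, hD0] at hx'
    linarith

end Aux4
section Aux5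
variable {a : ℕ → ℕ} {D : ℕ → ℝ}

lemma ostro_tail_geo (hpos : ∀ n, 0 < D n) {N : ℕ}
    (hhalf : ∀ j, N ≤ j → D (j + 1) ≤ D j / 2) (hDsum : Summable D)
    {k : ℕ} (hk : N ≤ k) : ∑' i, D (i + (k + 1)) ≤ 2 * D (k + 1) := by
  have hbd : ∀ i : ℕ, D (i + (k + 1)) ≤ D (k + 1) * (1 / 2) ^ i := by
    intro i
    induction i with
    | zero => simp
    | succ i ih =>
      have h1 : D (i + (k + 1) + 1) ≤ D (i + (k + 1)) / 2 := hhalf _ (by omega)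
      have e : i + 1 + (k + 1) = i + (k + 1) + 1 := by omega
      rw [e]
      have hD : 0 < D (k + 1) := hpos _
      calc D (i + (k + 1) + 1) ≤ D (i + (k + 1)) / 2 := h1
        _ ≤ D (k + 1) * (1 / 2) ^ i / 2 := by linarith
        _ = D (k + 1) * (1 / 2) ^ (i + 1) := by ring
  have hsum1 : Summable (fun i => D (i + (k + 1))) := (summable_nat_add_iff (k + 1)).mpr hDsum
  have hsum2 : Summable (fun i : ℕ => D (k + 1) * (1 / 2) ^ i) :=
    (summable_geometric_of_lt_one (by norm_num) (by norm_num)).mul_left _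
  calc ∑' i, D (i + (k + 1)) ≤ ∑' i : ℕ, D (k + 1) * (1 / 2) ^ i :=
        Summable.tsum_le_tsum hbd hsum1 hsum2
    _ = D (k + 1) * (1 - 1 / 2)⁻¹ := by
        rw [tsum_mul_left, tsum_geometric_of_lt_one (by norm_num) (by norm_num)]
    _ = 2 * D (k + 1) := by ring

set_option maxHeartbeats 1000000 in
lemma ostro_forward (ha : ∀ n, 1 ≤ a n) (hpos : ∀ n, 0 < D n)
    (hrec : ∀ n, D n = a n * D (n + 1) + D (n + 2)) (hD1lt : D 1 < 1)
    (hfin : ¬ {n : ℕ | a n = 1}.Infinite) :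
    ∃ x : ℝ, x ∈ Set.Ioo (0 : ℝ) 1 ∧
      ∃! xs : ℕ → ℕ, (∀ n, xs n ≤ a n) ∧ x = ∑' n : ℕ, (xs n : ℝ) * D (n + 1) := by
  have hfin' : {n : ℕ | a n = 1}.Finite := Set.not_infinite.mp hfin
  obtain ⟨B, hB⟩ := hfin'.bddAbove
  obtain ⟨N, hN1, ha2⟩ : ∃ N : ℕ, 1 ≤ N ∧ ∀ m, N ≤ m → 2 ≤ a m := by
    refine ⟨B + 2, by omega, ?_⟩
    intro m hm
    by_contra h
    have h1 : a m = 1 := by have := ha m; omega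
    have h2 : m ∈ {n : ℕ | a n = 1} := h1
    have := hB h2
    omega
  have ha2' : ∀ m, N ≤ m → (2 : ℝ) ≤ (a m : ℝ) := fun m hm => by exact_mod_cast ha2 m hm
  have hhalf : ∀ j, N ≤ j → D (j + 1) ≤ D j / 2 := by
    intro j hj
    have h2 := hrec j
    have h3 := hpos (j + 1)
    have h4 := hpos (j + 2)
    have h5 := ha2' j hj
    nlinarith [mul_nonneg (sub_nonneg.mpr h5) h3.le]
  have hDsum := ostro_summable ha hpos hrec
  have h2D : ∀ m, N ≤ m → 2 * D (m + 1) < D m := by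
    intro m hm
    have h2 := hrec m
    have h3 := hpos (m + 1)
    have h4 := hpos (m + 2)
    have h5 := ha2' m hm
    nlinarith [mul_nonneg (sub_nonneg.mpr h5) h3.le]
  obtain ⟨xs, hxb, hxN, hx0⟩ : ∃ xs : ℕ → ℕ, (∀ n, xs n ≤ a n) ∧
      (∀ m, N ≤ m → xs m = 1) ∧ (∀ m, m < N → xs m = 0) := by
    refine ⟨fun m => if N ≤ m then 1 else 0, ?_, ?_, ?_⟩
    · intro n
      by_cases h : N ≤ n
      · simpa [h] using ha n
      · simp [h]
    · intro m hm; simp [hm]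
    · intro m hm; simp [Nat.not_le.mpr hm]
  have hfs : Summable (fun m => (xs m : ℝ) * D (m + 1)) :=
    ostro_digit_summable ha hpos hrec hxb
  have htail_eq : ∀ M, N ≤ M →
      ∑' i, (xs (i + M) : ℝ) * D (i + M + 1) = ∑' i, D (i + (M + 1)) := by
    intro M hM
    apply tsum_congr
    intro i
    rw [hxN (i + M) (by omega)]
    have e : i + M + 1 = i + (M + 1) := by omega
    rw [e]
    norm_num
  have hx_tail : ∑' n : ℕ, (xs n : ℝ) * D (n + 1) = ∑' i, D (i + (N + 1)) := by
    rw [← Summable.sum_add_tsum_nat_add N hfs]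
    have hhead0 : ∑ i ∈ Finset.range N, (xs i : ℝ) * D (i + 1) = 0 := by
      apply Finset.sum_eq_zero
      intro i hi
      rw [hx0 i (Finset.mem_range.mp hi)]
      norm_num
    rw [hhead0, htail_eq N le_rfl, zero_add]
  have hx_pos : 0 < ∑' n : ℕ, (xs n : ℝ) * D (n + 1) := by
    rw [hx_tail]
    have hs : Summable (fun i => D (i + (N + 1))) := (summable_nat_add_iff (N + 1)).mpr hDsum
    have h1 : D (0 + (N + 1)) ≤ ∑' i, D (i + (N + 1)) :=
      Summable.le_tsum hs 0 (fun j _ => (hpos _).le)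
    have h2 := hpos (0 + (N + 1))
    linarith
  have hx_lt : ∑' n : ℕ, (xs n : ℝ) * D (n + 1) < 1 := by
    rw [hx_tail]
    have h1 := ostro_tail_geo hpos hhalf hDsum (le_refl N)
    have h2 := h2D N le_rfl
    have h3 : D N ≤ D 1 := ostro_anti_le ha hpos hrec 1 N hN1
    linarith
  refine ⟨∑' n : ℕ, (xs n : ℝ) * D (n + 1), ⟨hx_pos, hx_lt⟩, xs, ⟨hxb, rfl⟩, ?_⟩
  rintro ys ⟨hyb, hysum⟩
  by_contra hne
  obtain ⟨m0, hm0⟩ := Function.ne_iff.mp hne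
  have hex : ∃ m, ys m ≠ xs m := ⟨m0, hm0⟩
  obtain ⟨k, hk, hmin⟩ : ∃ k, ys k ≠ xs k ∧ ∀ m, m < k → ys m = xs m :=
    ⟨Nat.find hex, Nat.find_spec hex, fun m hm => not_not.mp (Nat.find_min hex hm)⟩
  have hgs : Summable (fun m => (ys m : ℝ) * D (m + 1)) :=
    ostro_digit_summable ha hpos hrec hyb
  have htails : ∑' i, (ys (i + k) : ℝ) * D (i + k + 1)
      = ∑' i, (xs (i + k) : ℝ) * D (i + k + 1) := by
    have e1 := Summable.sum_add_tsum_nat_add (f := fun m => (ys m : ℝ) * D (m + 1)) k hgs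
    have e2 := Summable.sum_add_tsum_nat_add (f := fun m => (xs m : ℝ) * D (m + 1)) k hfs
    have eheads : ∑ i ∈ Finset.range k, (ys i : ℝ) * D (i + 1)
        = ∑ i ∈ Finset.range k, (xs i : ℝ) * D (i + 1) := by
      apply Finset.sum_congr rfl
      intro i hi
      rw [hmin i (Finset.mem_range.mp hi)]
    have hx2 : ∑' m, (xs m : ℝ) * D (m + 1) = ∑' m, (ys m : ℝ) * D (m + 1) := hysum
    rw [← e1, ← e2, eheads] at hx2
    linarith
  have hsplit_y : ∑' i, (ys (i + k) : ℝ) * D (i + k + 1)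
      = (ys k : ℝ) * D (k + 1) + ∑' i, (ys (i + (k + 1)) : ℝ) * D (i + (k + 1) + 1) :=
    tsum_shift_succ (f := fun m => (ys m : ℝ) * D (m + 1)) hgs k
  have hsplit_x : ∑' i, (xs (i + k) : ℝ) * D (i + k + 1)
      = (xs k : ℝ) * D (k + 1) + ∑' i, (xs (i + (k + 1)) : ℝ) * D (i + (k + 1) + 1) :=
    tsum_shift_succ (f := fun m => (xs m : ℝ) * D (m + 1)) hfs k
  rcases lt_trichotomy (ys k) (xs k) with hlt | heq | hgt
  · -- ys k < xs k : then xs k = 1, ys k = 0, N ≤ k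
    have hNk : N ≤ k := by
      by_contra h
      have := hx0 k (by omega)
      omega
    have hxk : xs k = 1 := hxN k hNk
    have hyk : ys k = 0 := by omega
    have hub_y : ∑' i, (ys (i + (k + 1)) : ℝ) * D (i + (k + 1) + 1) ≤ D (k + 1) + D (k + 2) := by
      have h := ostro_tail_ub ha hpos hrec hyb (k + 1)
      have e : k + 1 + 1 = k + 2 := by omega
      rwa [e] at h
    have hlb_x : D (k + 2) + D (k + 3) ≤ ∑' i, (xs (i + (k + 1)) : ℝ) * D (i + (k + 1) + 1) := by
      rw [htail_eq (k + 1) (by omega)]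
      have e : k + 1 + 1 = k + 2 := by omega
      rw [e]
      have hsum1 : Summable (fun i => D (i + (k + 2))) := (summable_nat_add_iff (k + 2)).mpr hDsum
      have h2 : ∑ i ∈ Finset.range 2, D (i + (k + 2)) ≤ ∑' i, D (i + (k + 2)) :=
        Summable.sum_le_tsum _ (fun i _ => (hpos _).le) hsum1
      have h3 : ∑ i ∈ Finset.range 2, D (i + (k + 2)) = D (k + 2) + D (k + 3) := by
        rw [Finset.sum_range_succ, Finset.sum_range_one]
        have e1 : 0 + (k + 2) = k + 2 := by omega
        have e2 : 1 + (k + 2) = k + 3 := by omega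
        rw [e1, e2]
      linarith
    rw [htails, hsplit_x] at hsplit_y
    rw [hyk] at hsplit_y
    rw [hxk] at hsplit_y
    norm_num at hsplit_y
    have h5 := hpos (k + 3)
    have h6 := hpos (k + 1)
    linarith [hsplit_y, hub_y, hlb_x]
  · exact hk heq
  · -- xs k < ys k
    have hge : (xs k : ℝ) + 1 ≤ (ys k : ℝ) := by exact_mod_cast hgt
    have hnn_y : 0 ≤ ∑' i, (ys (i + (k + 1)) : ℝ) * D (i + (k + 1) + 1) :=
      ostro_tail_nonneg hpos ys (k + 1)
    have hkey : D (k + 1) ≤ ∑' i, (xs (i + (k + 1)) : ℝ) * D (i + (k + 1) + 1) := by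
      rw [htails, hsplit_x] at hsplit_y
      have h1 := hpos (k + 1)
      nlinarith [hsplit_y, hnn_y, hge]
    have hsmall : ∑' i, (xs (i + (k + 1)) : ℝ) * D (i + (k + 1) + 1) < D (k + 1) := by
      have hM1 : k + 1 ≤ max (k + 1) N := le_max_left _ _
      have hM2 : N ≤ max (k + 1) N := le_max_right _ _
      have hdrop : ∑' i, (xs (i + (k + 1)) : ℝ) * D (i + (k + 1) + 1)
          = ∑' i, (xs (i + max (k + 1) N) : ℝ) * D (i + max (k + 1) N + 1) := by
        have hs : Summable (fun i => (xs (i + (k + 1)) : ℝ) * D (i + (k + 1) + 1)) :=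
          (summable_nat_add_iff (k + 1)).mpr hfs
        have e0 := Summable.sum_add_tsum_nat_add
          (f := fun i => (xs (i + (k + 1)) : ℝ) * D (i + (k + 1) + 1)) (max (k + 1) N - (k + 1)) hs
        have hhead0 : ∑ i ∈ Finset.range (max (k + 1) N - (k + 1)),
            (xs (i + (k + 1)) : ℝ) * D (i + (k + 1) + 1) = 0 := by
          apply Finset.sum_eq_zero
          intro i hi
          have hiM := Finset.mem_range.mp hi
          have hlt' : i + (k + 1) < N := by
            rcases Nat.le_total N (k + 1) with h | h
            · have : max (k + 1) N = k + 1 := max_eq_left h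
              omega
            · have : max (k + 1) N = N := max_eq_right h
              omega
          rw [hx0 _ hlt']
          norm_num
        have htail2 : ∑' i, (xs (i + (max (k + 1) N - (k + 1)) + (k + 1)) : ℝ)
              * D (i + (max (k + 1) N - (k + 1)) + (k + 1) + 1)
            = ∑' i, (xs (i + max (k + 1) N) : ℝ) * D (i + max (k + 1) N + 1) := by
          apply tsum_congr
          intro i
          have e : i + (max (k + 1) N - (k + 1)) + (k + 1) = i + max (k + 1) N := by omega
          rw [e]
        rw [hhead0, zero_add] at e0
        rw [← e0, htail2]
      rw [hdrop, htail_eq _ hM2]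
      have h1 := ostro_tail_geo hpos hhalf hDsum hM2
      have h2 := h2D _ hM2
      have h3 : D (max (k + 1) N) ≤ D (k + 1) := ostro_anti_le ha hpos hrec (k + 1) _ hM1
      linarith
    linarith
end Aux5

/-- in the Ostrowski setting, the set `V_α` of `x ∈ (0,1)` having a unique
representation `x = Σ x_n α_n` with digits `0 ≤ x_n ≤ a_n` is empty iff `a_n = 1` for
infinitely many `n`. -/
theorem unique_ostrowski_empty_iff
    (α : ℝ) (hα : α ∈ Set.Ioo (0 : ℝ) 1) (hirr : Irrational α)
    (a : ℕ → ℕ) (ha : ∀ n, 1 ≤ a n)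
    (D : ℕ → ℝ) (hD0 : D 0 = 1) (hD1 : D 1 = α) (hpos : ∀ n, 0 < D n)
    (hrec : ∀ n, D n = a n * D (n + 1) + D (n + 2)) :
    {x : ℝ | x ∈ Set.Ioo (0 : ℝ) 1 ∧
        ∃! xs : ℕ → ℕ, (∀ n, xs n ≤ a n) ∧ x = ∑' n : ℕ, (xs n : ℝ) * D (n + 1)} = ∅ ↔
      {n : ℕ | a n = 1}.Infinite := by
  constructor
  · intro hempty
    by_contra hfin
    have hD1lt : D 1 < 1 := by rw [hD1]; exact hα.2
    obtain ⟨x, hx, huni⟩ := ostro_forward ha hpos hrec hD1lt hfin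
    have hmem : x ∈ {x : ℝ | x ∈ Set.Ioo (0 : ℝ) 1 ∧
        ∃! xs : ℕ → ℕ, (∀ n, xs n ≤ a n) ∧ x = ∑' n : ℕ, (xs n : ℝ) * D (n + 1)} :=
      ⟨hx, huni⟩
    rw [hempty] at hmem
    exact hmem
  · intro hinf
    apply Set.eq_empty_iff_forall_notMem.mpr
    rintro x ⟨hx, huni⟩
    exact ostro_backward ha hpos hrec hD0 hinf hx.1 hx.2 huni
end

section
/- Let β > 1 be a Pisot number and ξ ∈ Q(β) such that Tr(aξ) ∈ Z for all a ∈ Z[β]. Then ||ξβⁿ|| → 0 exponentially as n → +∞, where ||·|| denotes distance to the nearest integer. -/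
/-!
For every `n`, `Tr(βⁿξ)` is an integer and equals the sum of the images of `βⁿξ` under the
`ℚ`-embeddings of `ℚ(β)` into `ℂ`. The real embedding contributes `ξβⁿ`; every other embedding
`σ` contributes `σ(ξ) σ(β)ⁿ`, where `σ(β)` is a conjugate of `β` different from `β`, so
`|σ(β)| < 1`. Hence `ξβⁿ` lies within `∑ σ, |σ(ξ)| |σ(β)|ⁿ` of an integer, and this sum decays
geometrically.
-/

open IntermediateField Finset Polynomial

theorem Finset.exists_sum_mul_pow_le_mul_pow {ι : Type*} (s : Finset ι) {c ρ : ι → ℝ}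
    (hc : ∀ i ∈ s, 0 ≤ c i) (hρ₀ : ∀ i ∈ s, 0 ≤ ρ i) (hρ₁ : ∀ i ∈ s, ρ i < 1) :
    ∃ C r : ℝ, 0 < C ∧ 0 ≤ r ∧ r < 1 ∧ ∀ n : ℕ, ∑ i ∈ s, c i * ρ i ^ n ≤ C * r ^ n := by
  classical
  -- `0` is inserted so that the maximum exists also for `s = ∅`.
  set r := (insert 0 (s.image ρ)).max' (insert_nonempty _ _)
  have hr₀ : 0 ≤ r := le_max' _ _ (mem_insert_self _ _)
  have hρr : ∀ i ∈ s, ρ i ≤ r := fun i hi =>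
    le_max' _ _ (mem_insert_of_mem (mem_image_of_mem ρ hi))
  have hr₁ : r < 1 := by
    refine (max'_lt_iff _ _).2 fun y hy => ?_
    rcases mem_insert.1 hy with rfl | hy
    · exact one_pos
    · obtain ⟨i, hi, rfl⟩ := mem_image.1 hy
      exact hρ₁ i hi
  have hsum : 0 ≤ ∑ i ∈ s, c i := sum_nonneg hc
  refine ⟨1 + ∑ i ∈ s, c i, r, by linarith, hr₀, hr₁, fun n => ?_⟩
  calc ∑ i ∈ s, c i * ρ i ^ n ≤ ∑ i ∈ s, c i * r ^ n :=
        sum_le_sum fun i hi => by gcongr; exacts [hc i hi, hρ₀ i hi, hρr i hi]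
    _ ≤ (1 + ∑ i ∈ s, c i) * r ^ n := by
        rw [← sum_mul]; gcongr; linarith

theorem IntermediateField.isRoot_map_minpoly_int_gen {F L E : Type*} [Field F] [Field L]
    [Algebra F L] [Ring E] (β : L) (σ : F⟮β⟯ →+* E) :
    ((minpoly ℤ β).map (Int.castRingHom E)).IsRoot (σ (AdjoinSimple.gen F β)) := by
  have hgen : aeval (AdjoinSimple.gen F β) (minpoly ℤ β) = 0 := by
    apply (algebraMap F⟮β⟯ L).injective
    rw [← aeval_algebraMap_apply, AdjoinSimple.algebraMap_gen, minpoly.aeval, map_zero]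
  rw [IsRoot, eval_map, ← map_zero σ, ← hgen, aeval_def, hom_eval₂]
  congr
  exact RingHom.ext_int _ _

theorem IntermediateField.algHom_gen_ne {F L E : Type*} [Field F] [Field L] [Algebra F L]
    [Semiring E] [Algebra F E] {β : L} {σ τ : F⟮β⟯ →ₐ[F] E} (h : σ ≠ τ) :
    σ (AdjoinSimple.gen F β) ≠ τ (AdjoinSimple.gen F β) := fun hgen =>
  h <| adjoin_algHom_ext F fun x hx => by rw [Set.mem_singleton_iff] at hx; subst hx; exact hgen

theorem abs_sub_intCast_le_sum_norm_embeddings {K : Type*} [Field K] [Algebra ℚ K]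
    [FiniteDimensional ℚ K] [DecidableEq (K →ₐ[ℚ] ℂ)] (σ₀ : K →ₐ[ℚ] ℂ) {x : K} {t : ℝ}
    (hx : σ₀ x = t) {m : ℤ} (hm : Algebra.trace ℚ K x = m) :
    |t - m| ≤ ∑ σ ∈ univ.erase σ₀, ‖σ x‖ := by
  have htrace : (m : ℂ) = t + ∑ σ ∈ univ.erase σ₀, σ x := by
    rw [← hx, add_sum_erase _ (fun σ : K →ₐ[ℚ] ℂ => σ x) (mem_univ σ₀),
      ← trace_eq_sum_embeddings, hm]
    simp
  calc |t - m| = ‖((m - t : ℝ) : ℂ)‖ := by rw [Complex.norm_real, Real.norm_eq_abs, abs_sub_comm]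
    _ = ‖∑ σ ∈ univ.erase σ₀, σ x‖ := by
        rw [Complex.ofReal_sub, Complex.ofReal_intCast, htrace, add_sub_cancel_left]
    _ ≤ ∑ σ ∈ univ.erase σ₀, ‖σ x‖ := norm_sum_le _ _

noncomputable def IntermediateField.complexEmbedding (K : IntermediateField ℚ ℝ) : K →ₐ[ℚ] ℂ :=
  (Complex.ofRealAm.restrictScalars ℚ).comp K.val

@[simp]
theorem IntermediateField.complexEmbedding_apply (K : IntermediateField ℚ ℝ) (x : K) :
    K.complexEmbedding x = ((x : ℝ) : ℂ) :=
  rfl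

theorem pisot_trace_dual_decay_general
    (β : ℝ) (hint : IsIntegral ℤ β)
    (hconj : ∀ z : ℂ, ((minpoly ℤ β).map (Int.castRingHom ℂ)).IsRoot z →
      z ≠ (β : ℂ) → ‖z‖ < 1)
    (ξ : ℝ) (hξ : ξ ∈ IntermediateField.adjoin ℚ ({β} : Set ℝ))
    (htr : ∀ a : IntermediateField.adjoin ℚ ({β} : Set ℝ),
      (a : ℝ) ∈ Algebra.adjoin ℤ ({β} : Set ℝ) →
      ∃ m : ℤ, Algebra.trace ℚ (IntermediateField.adjoin ℚ ({β} : Set ℝ))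
        (a * ⟨ξ, hξ⟩) = (m : ℚ)) :
    ∃ C r : ℝ, 0 < C ∧ 0 ≤ r ∧ r < 1 ∧
      ∀ n : ℕ, |ξ * β ^ n - (round (ξ * β ^ n) : ℝ)| ≤ C * r ^ n := by
  classical
  have : FiniteDimensional ℚ ℚ⟮β⟯ := adjoin.finiteDimensional hint.tower_top
  set b := AdjoinSimple.gen ℚ β
  set σ₀ := complexEmbedding ℚ⟮β⟯
  have hσb : ∀ σ ∈ univ.erase σ₀, ‖σ b‖ < 1 := fun σ hσ =>
    hconj _ (isRoot_map_minpoly_int_gen β σ.toRingHom) (algHom_gen_ne (ne_of_mem_erase hσ))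
  obtain ⟨C, r, hC, hr₀, hr₁, hbound⟩ := (univ.erase σ₀).exists_sum_mul_pow_le_mul_pow
    (c := fun σ => ‖σ ⟨ξ, hξ⟩‖) (fun _ _ => norm_nonneg _) (fun _ _ => norm_nonneg _) hσb
  refine ⟨C, r, hC, hr₀, hr₁, fun n => ?_⟩
  obtain ⟨m, hm⟩ := htr (b ^ n) (pow_mem (Algebra.self_mem_adjoin_singleton ℤ β) n)
  calc |ξ * β ^ n - round (ξ * β ^ n)| ≤ |ξ * β ^ n - m| := round_le _ _
    _ ≤ ∑ σ ∈ univ.erase σ₀, ‖σ (b ^ n * ⟨ξ, hξ⟩)‖ :=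
        abs_sub_intCast_le_sum_norm_embeddings σ₀ (by simp [σ₀, b, mul_comm]) hm
    _ = ∑ σ ∈ univ.erase σ₀, ‖σ ⟨ξ, hξ⟩‖ * ‖σ b‖ ^ n := by
        simp only [map_mul, map_pow, norm_mul, norm_pow, mul_comm]
    _ ≤ C * r ^ n := hbound n

/-- let `β > 1` be a Pisot number (an algebraic integer all of whose other
Galois conjugates have modulus `< 1`) and let `ξ ∈ ℚ(β)` satisfy `Tr(aξ) ∈ ℤ` for all
`a ∈ ℤ[β]`. Then `‖ξβⁿ‖` (distance to the nearest integer) tends to `0` exponentially. -/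
theorem pisot_trace_dual_decay
    (β : ℝ) (hβ1 : 1 < β) (hint : IsIntegral ℤ β)
    (hconj : ∀ z : ℂ, ((minpoly ℤ β).map (Int.castRingHom ℂ)).IsRoot z →
      z ≠ (β : ℂ) → ‖z‖ < 1)
    (ξ : ℝ) (hξ : ξ ∈ IntermediateField.adjoin ℚ ({β} : Set ℝ))
    (htr : ∀ a : IntermediateField.adjoin ℚ ({β} : Set ℝ),
      (a : ℝ) ∈ Algebra.adjoin ℤ ({β} : Set ℝ) →
      ∃ m : ℤ, Algebra.trace ℚ (IntermediateField.adjoin ℚ ({β} : Set ℝ))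
        (a * ⟨ξ, hξ⟩) = (m : ℚ)) :
    ∃ C r : ℝ, 0 < C ∧ 0 ≤ r ∧ r < 1 ∧
      ∀ n : ℕ, |ξ * β ^ n - (round (ξ * β ^ n) : ℝ)| ≤ C * r ^ n :=
  pisot_trace_dual_decay_general β hint hconj ξ hξ htr
end
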